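/- arXiv:1002.0756 — 3 statements merged into one kernel-verified Lean document; each statement's English description precedes it below -/
import Mathlib

section
/- Let h ∈ C²([0,∞)) solve h'' = G·h, h(0) = 0, h'(0) = 1, where G ∈ C⁰([0,∞)) is non-negative with ∫₀^∞ t·G(t) dt = b < ∞. Then for all t > 0: (i) h(t) > 0, (ii) h'(t) ≥ 1, (iii) h(t) ≥ t, and (iv) h'(t) ≤ e^b and h(t) ≤ e^b · t. -/
/-!
As long as `h' ≥ 0` we have `h ≥ 0`, hence `h'' = G h ≥ 0` and `h' ≥ 1`; a first-exit argument
therefore keeps `h'` positive for all time, and (i)–(iii) follow. Next, `t h' - h` has derivative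
`t G h ≥ 0`, so `h ≤ t h'`. Hence `(log h')' = G h / h' ≤ t G`, and integrating gives
`h' ≤ exp (∫₀ᵗ s G s ds) ≤ e^b`; one more integration gives `h ≤ e^b t`.
-/

open Real MeasureTheory Set

theorem le_of_hasDerivAt_le {f g f' g' : ℝ → ℝ} {a b : ℝ}
    (hf : ∀ x ∈ Icc a b, HasDerivAt f (f' x) x) (hg : ∀ x ∈ Icc a b, HasDerivAt g (g' x) x)
    (ha : f a ≤ g a) (hle : ∀ x ∈ Ico a b, f' x ≤ g' x) : ∀ x ∈ Icc a b, f x ≤ g x :=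
  image_le_of_deriv_right_le_deriv_boundary
    (continuousOn_of_forall_continuousAt fun x hx => (hf x hx).continuousAt)
    (fun x hx => (hf x (Ico_subset_Icc_self hx)).hasDerivWithinAt) ha
    (continuousOn_of_forall_continuousAt fun x hx => (hg x hx).continuousAt)
    (fun x hx => (hg x (Ico_subset_Icc_self hx)).hasDerivWithinAt) hle

theorem pos_of_forall_pos_on_Ico {f : ℝ → ℝ} {a : ℝ} (hf : ContinuousOn f (Ici a))
    (step : ∀ u ∈ Ici a, (∀ s ∈ Ico a u, 0 < f s) → 0 < f u) : ∀ t ∈ Ici a, 0 < f t := by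
  intro t ht
  by_contra! hft
  set A := Icc a t ∩ f ⁻¹' Iic 0
  have hA : IsClosed A :=
    (hf.mono Icc_subset_Ici_self).preimage_isClosed_of_isClosed isClosed_Icc isClosed_Iic
  have hbdd : BddBelow A := ⟨a, fun s hs => hs.1.1⟩
  have hfirst : sInf A ∈ A := hA.csInf_mem ⟨t, ⟨ht, le_rfl⟩, hft⟩ hbdd
  refine (step _ hfirst.1.1 fun s hs => ?_).not_ge hfirst.2
  by_contra! hfs
  exact (csInf_le hbdd ⟨⟨hs.1, hs.2.le.trans hfirst.1.2⟩, hfs⟩).not_gt hs.2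

theorem intervalIntegral_le_integral_Ioi {f : ℝ → ℝ} {a t : ℝ} (hf : IntegrableOn f (Ioi a))
    (hf₀ : ∀ x ∈ Ioi a, 0 ≤ f x) (ht : a ≤ t) : ∫ x in a..t, f x ≤ ∫ x in Ioi a, f x := by
  rw [intervalIntegral.integral_of_le ht]
  exact setIntegral_mono_set hf ((ae_restrict_mem measurableSet_Ioi).mono hf₀)
    Ioc_subset_Ioi_self.eventuallyLE

structure IsWarpingFunction (G h h' : ℝ → ℝ) : Prop where
  hasDerivAt : ∀ t ∈ Ici (0 : ℝ), HasDerivAt h (h' t) t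
  hasDerivAt_deriv : ∀ t ∈ Ici (0 : ℝ), HasDerivAt h' (G t * h t) t
  apply_zero : h 0 = 0
  deriv_zero : h' 0 = 1

namespace IsWarpingFunction

variable {G h h' : ℝ → ℝ}

theorem nonneg_of_deriv_nonneg (hw : IsWarpingFunction G h h') {u : ℝ}
    (hh' : ∀ s ∈ Ico 0 u, 0 ≤ h' s) : ∀ s ∈ Icc 0 u, 0 ≤ h s :=
  le_of_hasDerivAt_le (fun x _ => hasDerivAt_const x 0) (fun x hx => hw.hasDerivAt x hx.1)
    hw.apply_zero.ge hh'

theorem one_le_deriv_of_deriv_nonneg (hw : IsWarpingFunction G h h')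
    (hG : ∀ t ∈ Ici (0 : ℝ), 0 ≤ G t) {u : ℝ} (hh' : ∀ s ∈ Ico 0 u, 0 ≤ h' s) :
    ∀ s ∈ Icc 0 u, 1 ≤ h' s :=
  le_of_hasDerivAt_le (fun x _ => hasDerivAt_const x 1)
    (fun x hx => hw.hasDerivAt_deriv x hx.1) hw.deriv_zero.ge
    fun x hx => mul_nonneg (hG x hx.1) (hw.nonneg_of_deriv_nonneg hh' x (Ico_subset_Icc_self hx))

theorem one_le_deriv (hw : IsWarpingFunction G h h') (hG : ∀ t ∈ Ici (0 : ℝ), 0 ≤ G t) :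
    ∀ t ∈ Ici (0 : ℝ), 1 ≤ h' t := by
  have hcont : ContinuousOn h' (Ici 0) :=
    continuousOn_of_forall_continuousAt fun x hx => (hw.hasDerivAt_deriv x hx).continuousAt
  have hpos : ∀ t ∈ Ici (0 : ℝ), 0 < h' t :=
    pos_of_forall_pos_on_Ico hcont fun u hu hlt => one_pos.trans_le <|
      hw.one_le_deriv_of_deriv_nonneg hG (fun s hs => (hlt s hs).le) u ⟨hu, le_rfl⟩
  intro t ht
  exact hw.one_le_deriv_of_deriv_nonneg hG (fun s hs => (hpos s hs.1).le) t ⟨ht, le_rfl⟩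

theorem nonneg (hw : IsWarpingFunction G h h') (hG : ∀ t ∈ Ici (0 : ℝ), 0 ≤ G t) :
    ∀ t ∈ Ici (0 : ℝ), 0 ≤ h t := fun t ht =>
  hw.nonneg_of_deriv_nonneg (fun s hs => zero_le_one.trans (hw.one_le_deriv hG s hs.1)) t
    ⟨ht, le_rfl⟩

theorem self_le (hw : IsWarpingFunction G h h') (hG : ∀ t ∈ Ici (0 : ℝ), 0 ≤ G t) :
    ∀ t ∈ Ici (0 : ℝ), t ≤ h t := fun t ht =>
  le_of_hasDerivAt_le (fun x _ => hasDerivAt_id x) (fun x hx => hw.hasDerivAt x hx.1)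
    hw.apply_zero.ge (fun x hx => hw.one_le_deriv hG x hx.1) t ⟨ht, le_rfl⟩

theorem le_mul_deriv (hw : IsWarpingFunction G h h') (hG : ∀ t ∈ Ici (0 : ℝ), 0 ≤ G t) :
    ∀ t ∈ Ici (0 : ℝ), h t ≤ t * h' t := fun t ht =>
  le_of_hasDerivAt_le (fun x hx => hw.hasDerivAt x hx.1)
    (fun x hx => ((hasDerivAt_id x).mul (hw.hasDerivAt_deriv x hx.1)))
    (by simp [hw.apply_zero])
    (fun x hx => by
      have := mul_nonneg hx.1 (mul_nonneg (hG x hx.1) (hw.nonneg hG x hx.1))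
      simp only [id, one_mul]
      linarith)
    t ⟨ht, le_rfl⟩

theorem deriv_le_exp_integral (hw : IsWarpingFunction G h h') (hG : ∀ t ∈ Ici (0 : ℝ), 0 ≤ G t)
    {t : ℝ} (ht : 0 ≤ t) (hint : IntegrableOn (fun s => s * G s) (Icc 0 t)) :
    h' t ≤ exp (∫ s in 0..t, s * G s) := by
  have hpos : ∀ s ∈ Ici (0 : ℝ), 0 < h' s := fun s hs => one_pos.trans_le (hw.one_le_deriv hG s hs)
  have hlog : log (h' t) - log (h' 0) ≤ ∫ s in 0..t, s * G s := by
    refine intervalIntegral.sub_le_integral_of_hasDeriv_right_of_le ht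
      (continuousOn_of_forall_continuousAt fun x hx =>
        ((hw.hasDerivAt_deriv x hx.1).log (hpos x hx.1).ne').continuousAt)
      (fun x hx => ((hw.hasDerivAt_deriv x hx.1.le).log (hpos x hx.1.le).ne').hasDerivWithinAt)
      hint fun x hx => ?_
    rw [div_le_iff₀ (hpos x hx.1.le)]
    nlinarith [mul_le_mul_of_nonneg_left (hw.le_mul_deriv hG x hx.1.le) (hG x hx.1.le)]
  rw [hw.deriv_zero, log_one, sub_zero] at hlog
  exact (le_exp_log (h' t)).trans (exp_le_exp.mpr hlog)

theorem le_mul_of_deriv_le (hw : IsWarpingFunction G h h') {C : ℝ}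
    (hh' : ∀ t ∈ Ici (0 : ℝ), h' t ≤ C) : ∀ t ∈ Ici (0 : ℝ), h t ≤ C * t := fun t ht =>
  le_of_hasDerivAt_le (fun x hx => hw.hasDerivAt x hx.1)
    (fun x _ => by simpa using (hasDerivAt_id x).const_mul C) (by simp [hw.apply_zero])
    (fun x hx => hh' x hx.1) t ⟨ht, le_rfl⟩

end IsWarpingFunction

theorem warping_function_estimates_general
    (G h h' : ℝ → ℝ) (b : ℝ)
    (hGpos : ∀ t ∈ Ici (0 : ℝ), 0 ≤ G t)
    (hb : ∫ t in Ioi (0 : ℝ), t * G t = b)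
    (hbInt : IntegrableOn (fun t => t * G t) (Ioi 0))
    (hd1 : ∀ t ∈ Ici (0 : ℝ), HasDerivAt h (h' t) t)
    (hd2 : ∀ t ∈ Ici (0 : ℝ), HasDerivAt h' (G t * h t) t)
    (h0 : h 0 = 0) (h'0 : h' 0 = 1) :
    ∀ t > (0 : ℝ),
      0 < h t ∧ 1 ≤ h' t ∧ t ≤ h t ∧ h' t ≤ Real.exp b ∧ h t ≤ Real.exp b * t := by
  have hw : IsWarpingFunction G h h' := ⟨hd1, hd2, h0, h'0⟩
  have hderiv_le : ∀ t ∈ Ici (0 : ℝ), h' t ≤ exp b := fun t ht =>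
    calc h' t ≤ exp (∫ s in 0..t, s * G s) :=
          hw.deriv_le_exp_integral hGpos ht <| (integrableOn_Icc_iff_integrableOn_Ioc).mpr <|
            hbInt.mono_set Ioc_subset_Ioi_self
      _ ≤ exp b := exp_le_exp.mpr <| hb ▸ intervalIntegral_le_integral_Ioi hbInt
          (fun s (hs : 0 < s) => mul_nonneg hs.le (hGpos s hs.le)) ht
  intro t ht
  have ht₀ : t ∈ Ici (0 : ℝ) := ht.le
  exact ⟨ht.trans_le (hw.self_le hGpos t ht₀), hw.one_le_deriv hGpos t ht₀,
    hw.self_le hGpos t ht₀, hderiv_le t ht₀, hw.le_mul_of_deriv_le hderiv_le t ht₀⟩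

theorem warping_function_estimates
    (G h h' : ℝ → ℝ) (b : ℝ)
    (hG : ContinuousOn G (Ici 0)) (hGpos : ∀ t ∈ Ici (0 : ℝ), 0 ≤ G t)
    (hb : ∫ t in Ioi (0 : ℝ), t * G t = b)
    (hbInt : IntegrableOn (fun t => t * G t) (Ioi 0))
    (hd1 : ∀ t ∈ Ici (0 : ℝ), HasDerivAt h (h' t) t)
    (hd2 : ∀ t ∈ Ici (0 : ℝ), HasDerivAt h' (G t * h t) t)
    (h0 : h 0 = 0) (h'0 : h' 0 = 1) :
    ∀ t > (0 : ℝ),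
      0 < h t ∧ 1 ≤ h' t ∧ t ≤ h t ∧ h' t ≤ Real.exp b ∧ h t ≤ Real.exp b * t :=
  warping_function_estimates_general G h h' b hGpos hb hbInt hd1 hd2 h0 h'0
end

section
/- Let G ∈ C⁰([0,∞)) be non-negative with ∫₀^∞ t G(t) dt = b < ∞, and let h solve h'' = G h, h(0)=0, h'(0)=1. Then for every m ≥ 2 and t > 0, t^{m-1} ≤ h(t)^{m-1} ≤ e^{b(m-1)} t^{m-1}, and consequently ∫₀^t s^{m-1} ds ≤ ∫₀^t h(s)^{m-1} ds ≤ e^{b(m-1)} ∫₀^t s^{m-1} ds. -/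
/-!
The identities `(h h')' = h'² + G h²` and `(h'²)' = 2 G (h h')` make first `h h'` and then `h'²`
nondecreasing, so `h h' ≥ 0` and `h'² ≥ 1`; since `h'` is continuous and starts at `1`, it never
drops below `1`, whence `h(t) ≥ t`. Next `t h' - h` is nondecreasing, so `h ≤ t h'` and
`(log h')' = G h / h' ≤ t G`; integrating, `h' ≤ exp (∫₀^∞ t G) = e^b` and hence `h(t) ≤ e^b t`.
Raising to the power `m - 1` and integrating gives the rest.
-/

open Real MeasureTheory Set

theorem monotoneOn_Ici_of_hasDerivAt_nonneg {f f' : ℝ → ℝ} {a : ℝ}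
    (hf : ∀ x ∈ Ici a, HasDerivAt f (f' x) x) (hf' : ∀ x ∈ Ioi a, 0 ≤ f' x) :
    MonotoneOn f (Ici a) :=
  monotoneOn_of_hasDerivWithinAt_nonneg (convex_Ici a)
    (fun x hx => (hf x hx).continuousAt.continuousWithinAt)
    (fun x hx => (hf x (interior_subset hx)).hasDerivWithinAt)
    (fun x hx => hf' x (by rwa [interior_Ici] at hx))

theorem apply_le_of_hasDerivAt_nonneg {f f' : ℝ → ℝ} {a x : ℝ}
    (hf : ∀ x ∈ Ici a, HasDerivAt f (f' x) x) (hf' : ∀ x ∈ Ioi a, 0 ≤ f' x) (hx : a ≤ x) :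
    f a ≤ f x :=
  monotoneOn_Ici_of_hasDerivAt_nonneg hf hf' self_mem_Ici hx hx

structure IsJacobiSolution (G h h' : ℝ → ℝ) : Prop where
  hasDerivAt : ∀ t ∈ Ici (0 : ℝ), HasDerivAt h (h' t) t
  hasDerivAt_deriv : ∀ t ∈ Ici (0 : ℝ), HasDerivAt h' (G t * h t) t
  apply_zero : h 0 = 0
  deriv_zero : h' 0 = 1

namespace IsJacobiSolution

variable {G h h' : ℝ → ℝ} {t : ℝ}

theorem continuousOn (hh : IsJacobiSolution G h h') : ContinuousOn h (Ici 0) :=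
  fun t ht => (hh.hasDerivAt t ht).continuousAt.continuousWithinAt

theorem mul_deriv_nonneg (hh : IsJacobiSolution G h h') (hG : ∀ t ∈ Ici (0 : ℝ), 0 ≤ G t)
    (ht : 0 ≤ t) : 0 ≤ h t * h' t := by
  have key := apply_le_of_hasDerivAt_nonneg (f := fun t => h t * h' t)
    (fun s hs => (hh.hasDerivAt s hs).mul (hh.hasDerivAt_deriv s hs))
    (fun s hs => by nlinarith [hG s (Ioi_subset_Ici_self hs), sq_nonneg (h s), sq_nonneg (h' s)]) ht
  simpa [hh.apply_zero] using key

theorem one_le_deriv_sq (hh : IsJacobiSolution G h h') (hG : ∀ t ∈ Ici (0 : ℝ), 0 ≤ G t)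
    (ht : 0 ≤ t) : 1 ≤ h' t ^ 2 := by
  have key := apply_le_of_hasDerivAt_nonneg (f := fun t => h' t ^ 2)
    (fun s hs => (hh.hasDerivAt_deriv s hs).pow 2)
    (fun s hs => by
      have := mul_nonneg (hG s (Ioi_subset_Ici_self hs)) (hh.mul_deriv_nonneg hG (le_of_lt hs))
      simp only [Nat.cast_ofNat, Nat.add_one_sub_one, pow_one]
      linarith) ht
  simpa [hh.deriv_zero] using key

theorem one_le_deriv (hh : IsJacobiSolution G h h') (hG : ∀ t ∈ Ici (0 : ℝ), 0 ≤ G t)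
    (ht : 0 ≤ t) : 1 ≤ h' t := by
  by_contra! hlt
  have hneg : h' t ≤ -1 := by nlinarith [hh.one_le_deriv_sq hG ht]
  have hcont : ContinuousOn h' (Icc 0 t) :=
    fun s hs => (hh.hasDerivAt_deriv s hs.1).continuousAt.continuousWithinAt
  obtain ⟨s, hs, hs0⟩ : (0 : ℝ) ∈ h' '' Icc 0 t :=
    intermediate_value_Icc' ht hcont ⟨by linarith, by linarith [hh.deriv_zero]⟩
  have := hh.one_le_deriv_sq hG hs.1
  norm_num [hs0] at this

theorem self_le (hh : IsJacobiSolution G h h') (hG : ∀ t ∈ Ici (0 : ℝ), 0 ≤ G t)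
    (ht : 0 ≤ t) : t ≤ h t := by
  have key := apply_le_of_hasDerivAt_nonneg (f := fun t => h t - t)
    (fun s hs => (hh.hasDerivAt s hs).sub (hasDerivAt_id s))
    (fun s hs => sub_nonneg.2 (hh.one_le_deriv hG (le_of_lt hs))) ht
  simp only [hh.apply_zero, sub_zero] at key
  linarith

theorem le_mul_deriv (hh : IsJacobiSolution G h h') (hG : ∀ t ∈ Ici (0 : ℝ), 0 ≤ G t)
    (ht : 0 ≤ t) : h t ≤ t * h' t := by
  have key := apply_le_of_hasDerivAt_nonneg (f := fun t => t * h' t - h t)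
    (fun s hs => ((hasDerivAt_id s).mul (hh.hasDerivAt_deriv s hs)).sub (hh.hasDerivAt s hs))
    (fun s hs => by
      have := mul_nonneg (mul_nonneg (le_of_lt hs) (hG s (Ioi_subset_Ici_self hs)))
        ((le_of_lt hs).trans (hh.self_le hG (le_of_lt hs)))
      simp only [one_mul, id]
      linarith) ht
  simp only [hh.apply_zero, zero_mul, sub_zero] at key
  linarith

theorem log_deriv_le_integral (hh : IsJacobiSolution G h h') (hG : ∀ t ∈ Ici (0 : ℝ), 0 ≤ G t)
    (hint : IntegrableOn (fun s => s * G s) (Icc 0 t)) (ht : 0 ≤ t) :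
    log (h' t) ≤ ∫ s in (0 : ℝ)..t, s * G s := by
  have hpos : ∀ s ∈ Ici (0 : ℝ), 0 < h' s := fun s hs => one_pos.trans_le (hh.one_le_deriv hG hs)
  have hlog : ∀ s ∈ Ici (0 : ℝ), HasDerivAt (fun s => log (h' s)) (G s * h s / h' s) s :=
    fun s hs => (hh.hasDerivAt_deriv s hs).log (hpos s hs).ne'
  have key := intervalIntegral.sub_le_integral_of_hasDeriv_right_of_le ht
    (fun s hs => (hlog s hs.1).continuousAt.continuousWithinAt)
    (fun s hs => (hlog s hs.1.le).hasDerivWithinAt) hint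
    (fun s hs => by
      rw [div_le_iff₀ (hpos s hs.1.le), mul_right_comm s, mul_comm (G s)]
      exact mul_le_mul_of_nonneg_right (hh.le_mul_deriv hG hs.1.le) (hG s hs.1.le))
  simpa [hh.deriv_zero] using key

theorem deriv_le_exp (hh : IsJacobiSolution G h h') (hG : ∀ t ∈ Ici (0 : ℝ), 0 ≤ G t)
    (hint : IntegrableOn (fun t => t * G t) (Ioi 0)) (ht : 0 ≤ t) :
    h' t ≤ exp (∫ s in Ioi (0 : ℝ), s * G s) := by
  have hint_t : IntegrableOn (fun s => s * G s) (Icc 0 t) :=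
    (integrableOn_Icc_iff_integrableOn_Ioc).2 (hint.mono_set Ioc_subset_Ioi_self)
  have partial_le : ∫ s in (0 : ℝ)..t, s * G s ≤ ∫ s in Ioi (0 : ℝ), s * G s := by
    rw [intervalIntegral.integral_of_le ht]
    refine setIntegral_mono_set hint ?_ Ioc_subset_Ioi_self.eventuallyLE
    exact (ae_restrict_iff' measurableSet_Ioi).2 <| .of_forall fun s hs =>
      mul_nonneg (le_of_lt hs) (hG s (Ioi_subset_Ici_self hs))
  rw [← log_le_iff_le_exp (one_pos.trans_le (hh.one_le_deriv hG ht))]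
  exact (hh.log_deriv_le_integral hG hint_t ht).trans partial_le

theorem le_exp_mul_self (hh : IsJacobiSolution G h h') (hG : ∀ t ∈ Ici (0 : ℝ), 0 ≤ G t)
    (hint : IntegrableOn (fun t => t * G t) (Ioi 0)) (ht : 0 ≤ t) :
    h t ≤ exp (∫ s in Ioi (0 : ℝ), s * G s) * t := by
  have key := apply_le_of_hasDerivAt_nonneg
    (f := fun t => exp (∫ s in Ioi (0 : ℝ), s * G s) * t - h t)
    (fun s hs => ((hasDerivAt_id s).const_mul _).sub (hh.hasDerivAt s hs))
    (fun s hs => by simpa using hh.deriv_le_exp hG hint (le_of_lt hs)) ht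
  simp only [hh.apply_zero, mul_zero, sub_zero] at key
  linarith

theorem rpow_le_exp_mul_rpow (hh : IsJacobiSolution G h h') (hG : ∀ t ∈ Ici (0 : ℝ), 0 ≤ G t)
    (hint : IntegrableOn (fun t => t * G t) (Ioi 0)) (ht : 0 ≤ t) {p : ℝ} (hp : 0 ≤ p) :
    h t ^ p ≤ exp ((∫ s in Ioi (0 : ℝ), s * G s) * p) * t ^ p := by
  calc h t ^ p ≤ (exp (∫ s in Ioi (0 : ℝ), s * G s) * t) ^ p :=
        rpow_le_rpow (ht.trans (hh.self_le hG ht)) (hh.le_exp_mul_self hG hint ht) hp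
    _ = exp ((∫ s in Ioi (0 : ℝ), s * G s) * p) * t ^ p := by
        rw [mul_rpow (exp_pos _).le ht, ← exp_mul]

end IsJacobiSolution

theorem model_sphere_area_comparison_general
    (G h h' : ℝ → ℝ) (b m : ℝ) (hm : 2 ≤ m)
    (hGpos : ∀ t ∈ Ici (0 : ℝ), 0 ≤ G t)
    (hb : ∫ t in Ioi (0 : ℝ), t * G t = b)
    (hbInt : IntegrableOn (fun t => t * G t) (Ioi 0))
    (hd1 : ∀ t ∈ Ici (0 : ℝ), HasDerivAt h (h' t) t)
    (hd2 : ∀ t ∈ Ici (0 : ℝ), HasDerivAt h' (G t * h t) t)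
    (h0 : h 0 = 0) (h'0 : h' 0 = 1) :
    ∀ t > (0 : ℝ),
      (t ^ (m - 1) ≤ h t ^ (m - 1) ∧
        h t ^ (m - 1) ≤ Real.exp (b * (m - 1)) * t ^ (m - 1)) ∧
      ((∫ s in (0 : ℝ)..t, s ^ (m - 1)) ≤ ∫ s in (0 : ℝ)..t, h s ^ (m - 1)) ∧
      (∫ s in (0 : ℝ)..t, h s ^ (m - 1)) ≤
        Real.exp (b * (m - 1)) * ∫ s in (0 : ℝ)..t, s ^ (m - 1) := by
  subst hb
  intro t ht
  have hh : IsJacobiSolution G h h' := ⟨hd1, hd2, h0, h'0⟩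
  have hp : 0 ≤ m - 1 := by linarith
  have lower : ∀ s ∈ Icc 0 t, s ^ (m - 1) ≤ h s ^ (m - 1) :=
    fun s hs => rpow_le_rpow hs.1 (hh.self_le hGpos hs.1) hp
  have upper := fun s (hs : s ∈ Icc 0 t) => hh.rpow_le_exp_mul_rpow hGpos hbInt hs.1 hp
  have int_pow : IntervalIntegrable (fun s : ℝ => s ^ (m - 1)) volume 0 t :=
    (continuous_rpow_const hp).intervalIntegrable 0 t
  have int_h_pow : IntervalIntegrable (fun s => h s ^ (m - 1)) volume 0 t := by
    refine ContinuousOn.intervalIntegrable ?_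
    rw [uIcc_of_le ht.le]
    exact (continuous_rpow_const hp).comp_continuousOn (hh.continuousOn.mono fun s hs => hs.1)
  refine ⟨⟨lower t (right_mem_Icc.2 ht.le), upper t (right_mem_Icc.2 ht.le)⟩,
    intervalIntegral.integral_mono_on ht.le int_pow int_h_pow lower, ?_⟩
  rw [← intervalIntegral.integral_const_mul]
  exact intervalIntegral.integral_mono_on ht.le int_h_pow (int_pow.const_mul _) upper

theorem model_sphere_area_comparison
    (G h h' : ℝ → ℝ) (b m : ℝ) (hm : 2 ≤ m)
    (hG : ContinuousOn G (Ici 0)) (hGpos : ∀ t ∈ Ici (0 : ℝ), 0 ≤ G t)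
    (hb : ∫ t in Ioi (0 : ℝ), t * G t = b)
    (hbInt : IntegrableOn (fun t => t * G t) (Ioi 0))
    (hd1 : ∀ t ∈ Ici (0 : ℝ), HasDerivAt h (h' t) t)
    (hd2 : ∀ t ∈ Ici (0 : ℝ), HasDerivAt h' (G t * h t) t)
    (h0 : h 0 = 0) (h'0 : h' 0 = 1) :
    ∀ t > (0 : ℝ),
      (t ^ (m - 1) ≤ h t ^ (m - 1) ∧
        h t ^ (m - 1) ≤ Real.exp (b * (m - 1)) * t ^ (m - 1)) ∧
      ((∫ s in (0 : ℝ)..t, s ^ (m - 1)) ≤ ∫ s in (0 : ℝ)..t, h s ^ (m - 1)) ∧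
      (∫ s in (0 : ℝ)..t, h s ^ (m - 1)) ≤
        Real.exp (b * (m - 1)) * ∫ s in (0 : ℝ)..t, s ^ (m - 1) :=
  model_sphere_area_comparison_general G h h' b m hm hGpos hb hbInt hd1 hd2 h0 h'0
end

section
/- Let m > p > 1 and φ_λ as above. Then t^{m-2} φ_λ(t) |φ_λ'(t)|^{p-1} is integrable on (0,∞). -/
open Real MeasureTheory Set

/-! With `q = p / (p - 1)` the conjugate-exponent relation `(q - 1) (p - 1) = 1` turns
`|φ'|^(p-1)` into `t` times a power of `λ + t^q`, so the integrand is a constant multiple of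
`t^(m-1) (λ + t^q)^(1-m)`. This is bounded near `0` and decays like `t^(-(m-1)/(p-1))` at
infinity, which is integrable exactly because `m > p`. -/

theorem integrableOn_Ioi_rpow_mul_add_rpow_rpow {a c lam q : ℝ} (hlam : 0 < lam) (ha : -1 < a)
    (hc : c ≤ 0) (hdecay : a + q * c < -1) :
    IntegrableOn (fun t => t ^ a * (lam + t ^ q) ^ c) (Ioi 0) := by
  have hmeas : AEStronglyMeasurable (fun t : ℝ => t ^ a * (lam + t ^ q) ^ c) :=
    (by fun_prop : Measurable fun t : ℝ => t ^ a * (lam + t ^ q) ^ c).aestronglyMeasurable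
  rw [← Ioc_union_Ioi_eq_Ioi zero_le_one]
  refine IntegrableOn.union ?_ ?_
  · refine ((intervalIntegral.intervalIntegrable_rpow' ha).1.mul_const (lam ^ c)).mono'
      hmeas.restrict ?_
    refine (ae_restrict_iff' measurableSet_Ioc).2 (.of_forall fun t ht => ?_)
    have hbase : lam ≤ lam + t ^ q := le_add_of_nonneg_right (rpow_nonneg ht.1.le q)
    rw [norm_mul, norm_of_nonneg (rpow_nonneg ht.1.le a),
      norm_of_nonneg (rpow_nonneg (hlam.trans_le hbase).le c)]
    exact mul_le_mul_of_nonneg_left (rpow_le_rpow_of_nonpos hlam hbase hc) (rpow_nonneg ht.1.le a)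
  · refine (integrableOn_Ioi_rpow_of_lt hdecay one_pos).mono' hmeas.restrict ?_
    refine (ae_restrict_iff' measurableSet_Ioi).2 (.of_forall fun t (ht : 1 < t) => ?_)
    have ht0 : 0 < t := one_pos.trans ht
    have hbase : t ^ q ≤ lam + t ^ q := le_add_of_nonneg_left hlam.le
    rw [norm_mul, norm_of_nonneg (rpow_nonneg ht0.le a),
      norm_of_nonneg (rpow_nonneg ((rpow_pos_of_pos ht0 q).trans_le hbase).le c),
      rpow_add ht0, rpow_mul ht0.le]
    exact mul_le_mul_of_nonneg_left (rpow_le_rpow_of_nonpos (rpow_pos_of_pos ht0 q) hbase hc)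
      (rpow_nonneg ht0.le a)

theorem hasDerivAt_const_mul_add_rpow_rpow (C lam q α : ℝ) {t : ℝ} (hlam : 0 < lam)
    (ht : 0 < t) :
    HasDerivAt (fun x => C * (lam + x ^ q) ^ α)
      (C * (q * t ^ (q - 1) * α * (lam + t ^ q) ^ (α - 1))) t := by
  have hbase : lam + t ^ q ≠ 0 := (add_pos_of_pos_of_nonneg hlam (rpow_nonneg ht.le q)).ne'
  exact (((hasDerivAt_rpow_const (Or.inl ht.ne')).const_add lam).rpow_const
    (Or.inl hbase)).const_mul C

theorem flux_density_eq_rpow_mul_add_rpow_rpow {m p q α C lam t : ℝ} (hlam : 0 < lam)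
    (hC : 0 ≤ C) (hq : 0 ≤ q) (hα : α ≤ 0) (hqp : (q - 1) * (p - 1) = 1)
    (hαp : α * p = p - m) (ht : 0 < t) :
    t ^ (m - 2) * (C * (lam + t ^ q) ^ α) *
        |deriv (fun x => C * (lam + x ^ q) ^ α) t| ^ (p - 1) =
      C * (C * q * (-α)) ^ (p - 1) * (t ^ (m - 1) * (lam + t ^ q) ^ (1 - m)) := by
  rw [(hasDerivAt_const_mul_add_rpow_rpow C lam q α hlam ht).deriv]
  set s := lam + t ^ q
  have hs : 0 < s := add_pos_of_pos_of_nonneg hlam (rpow_nonneg ht.le q)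
  set A := C * q * (-α)
  have hA : 0 ≤ A := mul_nonneg (mul_nonneg hC hq) (neg_nonneg.2 hα)
  have habs : |C * (q * t ^ (q - 1) * α * s ^ (α - 1))| = A * (t ^ (q - 1) * s ^ (α - 1)) := by
    rw [← abs_neg, show -(C * (q * t ^ (q - 1) * α * s ^ (α - 1))) =
      A * (t ^ (q - 1) * s ^ (α - 1)) by ring, abs_of_nonneg (by positivity)]
  clear_value A
  have ht_exp : t ^ (m - 1) = t ^ (m - 2) * t := by
    rw [← rpow_add_one ht.ne']
    ring_nf
  have hs_exp : s ^ (1 - m) = s ^ α * s ^ ((α - 1) * (p - 1)) := by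
    rw [← rpow_add hs]
    congr 1
    linear_combination -hαp
  rw [habs, mul_rpow hA (by positivity), mul_rpow (by positivity) (by positivity),
    ← rpow_mul ht.le, ← rpow_mul hs.le, hqp, rpow_one, ht_exp, hs_exp]
  ring

theorem weighted_flux_integrable
    (m p lam beta : ℝ) (hp : 1 < p) (hm : p < m) (hlam : 0 < lam) (hbeta : 0 < beta)
    (phi : ℝ → ℝ)
    (hphi : ∀ t, phi t = beta * lam ^ ((m - p) / p ^ 2) *
      (lam + t ^ (p / (p - 1))) ^ (1 - m / p)) :
    IntegrableOn (fun t => t ^ (m - 2) * phi t * |deriv phi t| ^ (p - 1)) (Ioi 0) := by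
  have hp1 : 0 < p - 1 := sub_pos.2 hp
  have hqp : (p / (p - 1) - 1) * (p - 1) = 1 := by field_simp; ring
  have hαp : (1 - m / p) * p = p - m := by field_simp
  set q := p / (p - 1)
  set α := 1 - m / p
  have hq : 0 ≤ q := by positivity
  have hα : α ≤ 0 := by nlinarith
  have hdecay : (m - 1) + q * (1 - m) < -1 := by
    have : ((m - 1) + q * (1 - m)) * (p - 1) = 1 - m := by linear_combination (1 - m) * hqp
    nlinarith
  obtain rfl : phi = fun x => beta * lam ^ ((m - p) / p ^ 2) * (lam + x ^ q) ^ α := funext hphi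
  have hbound : IntegrableOn (fun t => t ^ (m - 1) * (lam + t ^ q) ^ (1 - m)) (Ioi 0) :=
    integrableOn_Ioi_rpow_mul_add_rpow_rpow hlam (by linarith) (by linarith) hdecay
  exact IntegrableOn.congr_fun (hbound.const_mul _)
    (fun t ht =>
      (flux_density_eq_rpow_mul_add_rpow_rpow hlam (by positivity) hq hα hqp hαp ht).symm)
    measurableSet_Ioi
end
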